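/- The sequence of spectral radii of the matrices A_T is nondecreasing in the horizon: for every integer T ≥ 1 one has ρ(A_T) ≤ ρ(A_{T+1}). -/

import Mathlib

/-! A_T is entrywise nonnegative and is dominated entrywise by the leading T × T block of
A_{T+1}: the two agree except in the last column of A_T, where L₁ ≤ L̄. For nonnegative matrices
this domination passes to all powers, hence to their ℓ∞ operator norms, and Gelfand's formula
ρ(M) = lim ‖Mᵏ‖^(1/k) turns it into ρ(A_T) ≤ ρ(A_{T+1}). -/

noncomputable section

/-- The spectral radius of a real square matrix: the maximum modulus of its
complex eigenvalues. -/
def specRad {n : ℕ} (A : Matrix (Fin n) (Fin n) ℝ) : ℝ :=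
  sSup {x : ℝ | ∃ μ : ℂ, μ ∈ spectrum ℂ (A.map Complex.ofReal) ∧ x = ‖μ‖}

/-- `L̄ = L₁ / (1 - β K₁ / 2)`. -/
def Lbar (L1 K1 β : ℝ) : ℝ := L1 / (1 - β * K1 / 2)

/-- `K̄ = 3K₁/2 + K₁ L̄ / (2 ρ (1 - β))`. -/
def Kbar (L1 K1 rho β : ℝ) : ℝ := 3 * K1 / 2 + K1 * Lbar L1 K1 β / (2 * rho * (1 - β))

/-- `K̂ = K̄ + K₁ L̄ / ρ`. -/
def Khat (L1 K1 rho β : ℝ) : ℝ := Kbar L1 K1 rho β + K1 * Lbar L1 K1 β / rho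

/-- `r = K̄ β + (K₁/ρ) L₁ β`. -/
def rconst (L1 K1 rho β : ℝ) : ℝ := Kbar L1 K1 rho β * β + (K1 / rho) * L1 * β

/-- The `T × T` matrix `A_T` (1-based indices `1 ≤ i, j ≤ T` correspond to `0`-based
`Fin T` values `i-1, j-1`): entry `K̄ + L̄K₁/ρ` if `j = i - 1`, entry `(L̄K₁/ρ) β^(j-i+1)`
if `i - 1 < j ≤ T - 1`, entry `(L₁K₁/ρ) β^(T-i+1)` if `j = T`, and `0` if `j < i - 1`. -/
def AT (L1 K1 rho β : ℝ) (T : ℕ) : Matrix (Fin T) (Fin T) ℝ :=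
  fun i j =>
    if (j : ℕ) + 1 = T then (L1 * K1 / rho) * β ^ (T - (i : ℕ))
    else if (j : ℕ) + 1 = (i : ℕ) then Kbar L1 K1 rho β + Lbar L1 K1 β * K1 / rho
    else if (i : ℕ) ≤ (j : ℕ) then (Lbar L1 K1 β * K1 / rho) * β ^ ((j : ℕ) - (i : ℕ) + 1)
    else 0

end

open Matrix

theorem Finset.sum_comp_le_sum_of_nonneg {M : Type*} [AddCommMonoid M] [PartialOrder M]
    [IsOrderedAddMonoid M] {m n : Type*} [Fintype m] [Fintype n] (e : m ↪ n) (g : n → M)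
    (hg : ∀ x, 0 ≤ g x) : ∑ i, g (e i) ≤ ∑ x, g x := by
  rw [← Finset.sum_map Finset.univ e g]
  exact Finset.sum_le_univ_sum_of_nonneg hg

section NonnegMatrix

variable {R : Type*} [Semiring R] [PartialOrder R] [IsOrderedRing R]
  {m n : Type*} [Fintype m] [Fintype n] [DecidableEq m] [DecidableEq n]

theorem Matrix.pow_apply_le_pow_apply_of_le_submatrix {A : Matrix n n R} {B : Matrix m m R}
    (e : m ↪ n) (hA : ∀ i j, 0 ≤ A i j) (hB : ∀ i j, 0 ≤ B i j)
    (hBA : ∀ i j, B i j ≤ A (e i) (e j)) (k : ℕ) (i j : m) :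
    (B ^ k) i j ≤ (A ^ k) (e i) (e j) := by
  induction k generalizing j with
  | zero => by_cases h : i = j <;> simp [h]
  | succ k ih =>
    rw [pow_succ, pow_succ, mul_apply, mul_apply]
    calc ∑ l, (B ^ k) i l * B l j
        ≤ ∑ l, (A ^ k) (e i) (e l) * A (e l) (e j) :=
          Finset.sum_le_sum fun l _ =>
            mul_le_mul (ih l) (hBA l j) (hB l j) (pow_apply_nonneg hA k _ _)
      _ ≤ ∑ x, (A ^ k) (e i) x * A x (e j) :=
          Finset.sum_comp_le_sum_of_nonneg e (fun x => (A ^ k) (e i) x * A x (e j)) fun x =>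
            mul_nonneg (pow_apply_nonneg hA k _ _) (hA _ _)

end NonnegMatrix

section LinftyOpNorm

attribute [local instance] Matrix.linftyOpSeminormedAddCommGroup

theorem Matrix.linfty_opNNNorm_le_of_nnnorm_le {α β : Type*} [SeminormedAddCommGroup α]
    [SeminormedAddCommGroup β] {m n m' n' : Type*} [Fintype m] [Fintype n] [Fintype m']
    [Fintype n'] {B : Matrix m m' α} {A : Matrix n n' β} (e : m ↪ n) (f : m' ↪ n')
    (h : ∀ i j, ‖B i j‖₊ ≤ ‖A (e i) (f j)‖₊) :
    ‖B‖₊ ≤ ‖A‖₊ := by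
  rw [linfty_opNNNorm_def, linfty_opNNNorm_def]
  refine Finset.sup_le fun i _ => le_trans ?_ (Finset.le_sup (Finset.mem_univ (e i)))
  calc ∑ j, ‖B i j‖₊ ≤ ∑ j, ‖A (e i) (f j)‖₊ := Finset.sum_le_sum fun j _ => h i j
    _ ≤ ∑ x, ‖A (e i) x‖₊ :=
        Finset.sum_comp_le_sum_of_nonneg f (fun x => ‖A (e i) x‖₊) fun _ => zero_le

end LinftyOpNorm

theorem spectralRadius_le_of_forall_nnnorm_pow_le {A B : Type*} [NormedRing A]
    [NormedAlgebra ℂ A] [CompleteSpace A] [NormedRing B] [NormedAlgebra ℂ B] [CompleteSpace B]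
    {a : A} {b : B} (h : ∀ k : ℕ, ‖b ^ k‖₊ ≤ ‖a ^ k‖₊) :
    spectralRadius ℂ b ≤ spectralRadius ℂ a :=
  le_of_tendsto_of_tendsto' (spectrum.pow_nnnorm_pow_one_div_tendsto_nhds_spectralRadius b)
    (spectrum.pow_nnnorm_pow_one_div_tendsto_nhds_spectralRadius a)
    fun k => ENNReal.rpow_le_rpow (by exact_mod_cast h k) (by positivity)

theorem specRad_le_of_spectralRadius_le {m n : ℕ} {B : Matrix (Fin m) (Fin m) ℝ}
    {A : Matrix (Fin n) (Fin n) ℝ}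
    (h : spectralRadius ℂ (B.map Complex.ofReal) ≤ spectralRadius ℂ (A.map Complex.ofReal)) :
    specRad B ≤ specRad A := by
  have hbdd : BddAbove {x : ℝ | ∃ μ : ℂ, μ ∈ spectrum ℂ (A.map Complex.ofReal) ∧ x = ‖μ‖} :=
    (((A.map Complex.ofReal).finite_spectrum.image norm).bddAbove).mono <| by
      rintro _ ⟨μ, hμ, rfl⟩
      exact ⟨μ, hμ, rfl⟩
  have hA0 : 0 ≤ specRad A := Real.sSup_nonneg <| by
    rintro _ ⟨μ, -, rfl⟩
    exact norm_nonneg μ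
  have hA : spectralRadius ℂ (A.map Complex.ofReal) ≤ ENNReal.ofReal (specRad A) :=
    iSup₂_le fun μ hμ => by
      rw [← enorm_eq_nnnorm, ← ofReal_norm]
      exact ENNReal.ofReal_le_ofReal (le_csSup hbdd ⟨μ, hμ, rfl⟩)
  refine Real.sSup_le ?_ hA0
  rintro _ ⟨μ, hμ, rfl⟩
  rw [← ENNReal.ofReal_le_ofReal_iff hA0, ofReal_norm, enorm_eq_nnnorm]
  exact ((le_iSup₂ (f := fun ν (_ : ν ∈ spectrum ℂ (B.map Complex.ofReal)) => (‖ν‖₊ : ENNReal))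
    μ hμ).trans h).trans hA

section LinftyOpNormedRing

attribute [local instance] Matrix.linftyOpNormedRing Matrix.linftyOpNormedAlgebra

theorem specRad_le_of_le_submatrix {m n : ℕ} {B : Matrix (Fin m) (Fin m) ℝ}
    {A : Matrix (Fin n) (Fin n) ℝ} (e : Fin m ↪ Fin n) (hA : ∀ i j, 0 ≤ A i j)
    (hB : ∀ i j, 0 ≤ B i j) (hBA : ∀ i j, B i j ≤ A (e i) (e j)) :
    specRad B ≤ specRad A := by
  have : CompleteSpace (Matrix (Fin m) (Fin m) ℂ) := FiniteDimensional.complete ℂ _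
  have : CompleteSpace (Matrix (Fin n) (Fin n) ℂ) := FiniteDimensional.complete ℂ _
  apply specRad_le_of_spectralRadius_le
  refine spectralRadius_le_of_forall_nnnorm_pow_le fun k => ?_
  rw [show B.map Complex.ofReal ^ k = (B ^ k).map Complex.ofReal from
      (B.map_pow Complex.ofRealHom k).symm,
    show A.map Complex.ofReal ^ k = (A ^ k).map Complex.ofReal from
      (A.map_pow Complex.ofRealHom k).symm]
  refine linfty_opNNNorm_le_of_nnnorm_le e e fun i j => ?_
  simp only [map_apply, Complex.nnnorm_real,
    Real.nnnorm_of_nonneg (pow_apply_nonneg hB k i j),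
    Real.nnnorm_of_nonneg (pow_apply_nonneg hA k (e i) (e j))]
  exact pow_apply_le_pow_apply_of_le_submatrix e hA hB hBA k i j

end LinftyOpNormedRing

section AT

variable {L1 K1 rho β : ℝ}

theorem Lbar_pos (hL1 : 0 < L1) (hβK : β * K1 < 2) : 0 < Lbar L1 K1 β :=
  div_pos hL1 (by linarith)

theorem le_Lbar (hL1 : 0 < L1) (hK1 : 0 < K1) (hβ0 : 0 < β) (hβK : β * K1 < 2) :
    L1 ≤ Lbar L1 K1 β := by
  rw [Lbar, le_div_iff₀ (by linarith)]
  nlinarith [mul_pos hβ0 hK1]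

theorem Kbar_pos (hL1 : 0 < L1) (hK1 : 0 < K1) (hrho : 0 < rho) (hβ1 : β < 1)
    (hβK : β * K1 < 2) : 0 < Kbar L1 K1 rho β := by
  have := Lbar_pos hL1 hβK
  have : 0 < 1 - β := by linarith
  unfold Kbar
  positivity

theorem AT_nonneg (hL1 : 0 < L1) (hK1 : 0 < K1) (hrho : 0 < rho) (hβ0 : 0 < β) (hβ1 : β < 1)
    (hβK : β * K1 < 2) (T : ℕ) (i j : Fin T) : 0 ≤ AT L1 K1 rho β T i j := by
  have := Lbar_pos hL1 hβK
  have := Kbar_pos hL1 hK1 hrho hβ1 hβK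
  unfold AT
  split_ifs <;> positivity

theorem AT_le_AT_succ (hL1 : 0 < L1) (hK1 : 0 < K1) (hrho : 0 < rho) (hβ0 : 0 < β)
    (hβK : β * K1 < 2) (T : ℕ) (i j : Fin T) :
    AT L1 K1 rho β T i j ≤ AT L1 K1 rho β (T + 1) i.castSucc j.castSucc := by
  simp only [AT, Fin.val_castSucc, show (j : ℕ) + 1 ≠ T + 1 by omega, if_false]
  by_cases hjT : (j : ℕ) + 1 = T
  · have hij : (i : ℕ) ≤ j := by omega
    rw [if_pos hjT, if_neg (by omega), if_pos hij, show (j : ℕ) - i + 1 = T - i by omega]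
    gcongr
    exact le_Lbar hL1 hK1 hβ0 hβK
  · rw [if_neg hjT]

end AT

theorem stmt3_general (L1 K1 rho β : ℝ)
    (hL1 : 0 < L1) (hK1 : 0 < K1) (hrho : 0 < rho)
    (hβ0 : 0 < β) (hβ1 : β < 1) (hβK : β * K1 < 2)
    (T : ℕ) :
    specRad (AT L1 K1 rho β T) ≤ specRad (AT L1 K1 rho β (T + 1)) :=
  specRad_le_of_le_submatrix Fin.castSuccEmb (AT_nonneg hL1 hK1 hrho hβ0 hβ1 hβK (T + 1))
    (AT_nonneg hL1 hK1 hrho hβ0 hβ1 hβK T) (AT_le_AT_succ hL1 hK1 hrho hβ0 hβK T)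

/-- Monotonicity of the spectral radii: `ρ(A_T) ≤ ρ(A_{T+1})`. -/
theorem stmt3 (L1 K1 rho β : ℝ)
    (hL1 : 0 < L1) (hK1 : 0 < K1) (hrho : 0 < rho)
    (hβ0 : 0 < β) (hβ1 : β < 1) (hβK : β * K1 < 2)
    (T : ℕ) (hT : 1 ≤ T) :
    specRad (AT L1 K1 rho β T) ≤ specRad (AT L1 K1 rho β (T + 1)) :=
  stmt3_general L1 K1 rho β hL1 hK1 hrho hβ0 hβ1 hβK T
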